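/- arXiv:0810.3220 — 2 statements merged into one kernel-verified Lean document; each statement's English description precedes it below -/
import Mathlib

section
/- Let V₁ and V₂ be arbitrary subspaces of ℂ^n and set W = V₂ ∩ V₁^⊥. Then for all z ∈ ℂ, T_{V₂}(z) ∘ T_{V₁}(z) = T_{V₂ ∩ W^⊥}(z) ∘ T_{W ⊕ V₁}(z). Moreover the pair of subspaces on the right satisfies the non-intersection condition: (V₂ ∩ W^⊥) ∩ (W ⊕ V₁)^⊥ = {0}. -/
/-!
Write `W = V₂ ⊓ V₁ᗮ`. Since `W ⊥ V₁` and `W ⊥ (V₂ ⊓ Wᗮ)`, the projections split as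
`P_{V₂} = P_W + P_{V₂ ⊓ Wᗮ}` and `P_{W ⊔ V₁} = P_W + P_{V₁}`, so the two pairs of projections have
the same sum and, as `P_W P_{V₁} = 0 = P_{V₂ ⊓ Wᗮ} P_W`, the same product. Because
`T_V(z) = 1 + (z - 1) P_V`, a product `T_V(z) T_U(z)` only depends on `P_V + P_U` and `P_V P_U`.
-/

noncomputable def projc {n : ℕ} (V : Submodule ℂ (EuclideanSpace ℂ (Fin n))) :
    EuclideanSpace ℂ (Fin n) →L[ℂ] EuclideanSpace ℂ (Fin n) :=
  V.subtypeL.comp (V.orthogonalProjectionOnto)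

/-- `T_V(z) = z·Π_V + Π_V^⊥`. -/
noncomputable def Tc {n : ℕ} (V : Submodule ℂ (EuclideanSpace ℂ (Fin n))) (z : ℂ) :
    EuclideanSpace ℂ (Fin n) →L[ℂ] EuclideanSpace ℂ (Fin n) :=
  z • projc V + (1 - projc V)

theorem one_add_smul_mul_one_add_smul_congr {R A : Type*} [CommSemiring R] [Ring A]
    [Algebra R A] (a : R) {p q p' q' : A} (hsum : p + q = p' + q') (hmul : p * q = p' * q') :
    (1 + a • p) * (1 + a • q) = (1 + a • p') * (1 + a • q') := by
  have expand : ∀ x y : A, (1 + a • x) * (1 + a • y) = 1 + a • (x + y) + (a * a) • (x * y) := by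
    intro x y
    simp only [add_mul, mul_add, one_mul, mul_one, smul_mul_smul_comm, smul_add]
    abel
  rw [expand, expand, hsum, hmul]

namespace Submodule

variable {𝕜 E : Type*} [RCLike 𝕜] [NormedAddCommGroup E] [InnerProductSpace 𝕜 E]

theorem IsOrtho.starProjection_sup {U V : Submodule 𝕜 E} [U.HasOrthogonalProjection]
    [V.HasOrthogonalProjection] [(U ⊔ V).HasOrthogonalProjection] (h : U ⟂ V) :
    (U ⊔ V).starProjection = U.starProjection + V.starProjection := by
  ext x
  refine eq_starProjection_of_mem_orthogonal
    (add_mem_sup (U.starProjection_apply_mem x) (V.starProjection_apply_mem x)) ?_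
  rw [add_apply, ← inf_orthogonal]
  constructor
  · rw [sub_add_eq_sub_sub]
    exact Uᗮ.sub_mem (sub_starProjection_mem_orthogonal x) (h.ge (V.starProjection_apply_mem x))
  · rw [sub_add_eq_sub_sub, sub_right_comm]
    exact Vᗮ.sub_mem (sub_starProjection_mem_orthogonal x) (h.le (U.starProjection_apply_mem x))

theorem starProjection_eq_add_starProjection_inf_orthogonal {K V : Submodule 𝕜 E}
    [K.HasOrthogonalProjection] [V.HasOrthogonalProjection] [(V ⊓ Kᗮ).HasOrthogonalProjection]
    (hKV : K ≤ V) : V.starProjection = K.starProjection + (V ⊓ Kᗮ).starProjection := by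
  have hsplit : K ⊔ V ⊓ Kᗮ = V := by
    rw [inf_comm]
    exact sup_orthogonal_inf_of_hasOrthogonalProjection hKV
  have : (K ⊔ V ⊓ Kᗮ).HasOrthogonalProjection := by rw [hsplit]; infer_instance
  rw [← IsOrtho.starProjection_sup ((isOrtho_orthogonal_right K).mono_right inf_le_right)]
  congr!
  exact hsplit.symm

theorem inf_orthogonal_inf_orthogonal_sup_eq_bot (V₁ V₂ : Submodule 𝕜 E) :
    (V₂ ⊓ (V₂ ⊓ V₁ᗮ)ᗮ) ⊓ ((V₂ ⊓ V₁ᗮ) ⊔ V₁)ᗮ = ⊥ := by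
  rw [eq_bot_iff]
  rintro x ⟨⟨hx₂, hxWperp⟩, hxperp⟩
  have hxW : x ∈ V₂ ⊓ V₁ᗮ := ⟨hx₂, orthogonal_le le_sup_right hxperp⟩
  exact (V₂ ⊓ V₁ᗮ).orthogonal_disjoint.le_bot ⟨hxW, hxWperp⟩

variable [FiniteDimensional 𝕜 E] (V₁ V₂ : Submodule 𝕜 E)

theorem starProjection_add_starProjection_eq_transfer :
    V₂.starProjection + V₁.starProjection =
      (V₂ ⊓ (V₂ ⊓ V₁ᗮ)ᗮ).starProjection + ((V₂ ⊓ V₁ᗮ) ⊔ V₁).starProjection := by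
  rw [starProjection_eq_add_starProjection_inf_orthogonal (inf_le_left : V₂ ⊓ V₁ᗮ ≤ V₂),
    IsOrtho.starProjection_sup ((isOrtho_orthogonal_left V₁).mono_left inf_le_right)]
  abel

theorem starProjection_mul_starProjection_eq_transfer :
    V₂.starProjection * V₁.starProjection =
      (V₂ ⊓ (V₂ ⊓ V₁ᗮ)ᗮ).starProjection * ((V₂ ⊓ V₁ᗮ) ⊔ V₁).starProjection := by
  have hWV₁ : V₂ ⊓ V₁ᗮ ⟂ V₁ := (isOrtho_orthogonal_left V₁).mono_left inf_le_right
  have hWQ : V₂ ⊓ V₁ᗮ ⟂ V₂ ⊓ (V₂ ⊓ V₁ᗮ)ᗮ := (isOrtho_orthogonal_right _).mono_right inf_le_right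
  rw [starProjection_eq_add_starProjection_inf_orthogonal (inf_le_left : V₂ ⊓ V₁ᗮ ≤ V₂),
    hWV₁.starProjection_sup]
  simp only [add_mul, mul_add, ContinuousLinearMap.mul_def,
    hWV₁.starProjection_comp_starProjection, hWQ.symm.starProjection_comp_starProjection,
    zero_add]

end Submodule

theorem Tc_eq_one_add_smul_starProjection {n : ℕ} (V : Submodule ℂ (EuclideanSpace ℂ (Fin n)))
    (z : ℂ) : Tc V z = 1 + (z - 1) • V.starProjection := by
  rw [Tc, projc, ← Submodule.starProjection]
  module

theorem T_comp_general {n : ℕ} (V₁ V₂ : Submodule ℂ (EuclideanSpace ℂ (Fin n))) (z : ℂ) :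
    (Tc V₂ z).comp (Tc V₁ z)
      = (Tc (V₂ ⊓ (V₂ ⊓ V₁ᗮ)ᗮ) z).comp (Tc ((V₂ ⊓ V₁ᗮ) ⊔ V₁) z) ∧
    (V₂ ⊓ (V₂ ⊓ V₁ᗮ)ᗮ) ⊓ ((V₂ ⊓ V₁ᗮ) ⊔ V₁)ᗮ = ⊥ := by
  refine ⟨?_, Submodule.inf_orthogonal_inf_orthogonal_sup_eq_bot V₁ V₂⟩
  simp only [← ContinuousLinearMap.mul_def, Tc_eq_one_add_smul_starProjection]
  exact one_add_smul_mul_one_add_smul_congr _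
    (Submodule.starProjection_add_starProjection_eq_transfer V₁ V₂)
    (Submodule.starProjection_mul_starProjection_eq_transfer V₁ V₂)
end

section
/- The map φ : (ℂP^{n−1})^k → I_{n,k} sending a k-tuple of lines (L₁, …, L_k) to the internal structure of the product T_{L_k}(z)⋯T_{L₁}(z) is surjective, and is injective on the set of tuples satisfying L_{j+1} ∩ L_j^⊥ = {0} for all j. -/
/-- A vortex internal structure (Definition 1.1): an integer `k₀ ≥ 0` together with a
sequence `V 0, …, V (l-1)` of nonzero proper subspaces of `ℂ^n` such that consecutive
subspaces satisfy the non-intersection condition. -/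
structure VortexStructure (n : ℕ) where
  k₀ : ℕ
  l : ℕ
  V : Fin l → Submodule ℂ (EuclideanSpace ℂ (Fin n))
  ne_bot : ∀ j, V j ≠ ⊥
  ne_top : ∀ j, V j ≠ ⊤
  nonint : ∀ (j : ℕ) (h : j + 1 < l), V ⟨j + 1, h⟩ ⊓ (V ⟨j, Nat.lt_of_succ_lt h⟩)ᗮ = ⊥

/-- The order `n·k₀ + Σ_j dim V_j` of a vortex internal structure. -/
noncomputable def VortexStructure.order {n : ℕ} (s : VortexStructure n) : ℕ :=
  n * s.k₀ + ∑ j, Module.finrank ℂ (s.V j)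

/-- The product `T_{V_l}(z) ∘ ⋯ ∘ T_{V_1}(z)`. -/
noncomputable def VortexStructure.Tprod {n : ℕ} (s : VortexStructure n) (z : ℂ) :
    EuclideanSpace ℂ (Fin n) →L[ℂ] EuclideanSpace ℂ (Fin n) :=
  ((List.ofFn fun j => Tc (s.V j) z).reverse).prod

/-- `φ` factorizes near `0` as `φ(z) = A(z) · z^{k₀} · T_{V_l}(z) ⋯ T_{V_1}(z)` for a
matrix function `A` holomorphic and invertible near `0`. -/
def Factorizes {n : ℕ}
    (φ : ℂ → (EuclideanSpace ℂ (Fin n) →L[ℂ] EuclideanSpace ℂ (Fin n)))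
    (s : VortexStructure n) : Prop :=
  ∃ A : ℂ → (EuclideanSpace ℂ (Fin n) →L[ℂ] EuclideanSpace ℂ (Fin n)),
    AnalyticAt ℂ A 0 ∧
    ∀ᶠ z in nhds (0 : ℂ), IsUnit (A z) ∧ φ z = (A z).comp (z ^ s.k₀ • s.Tprod z)

open Topology Submodule
open scoped InnerProductSpace

theorem Submodule.IsOrtho.starProjection_sup_s18 {𝕜 E : Type*} [RCLike 𝕜] [NormedAddCommGroup E]
    [InnerProductSpace 𝕜 E] {U V : Submodule 𝕜 E} [U.HasOrthogonalProjection]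
    [V.HasOrthogonalProjection] [(U ⊔ V).HasOrthogonalProjection] (h : U ⟂ V) :
    (U ⊔ V).starProjection = U.starProjection + V.starProjection := by
  ext x : 1
  refine eq_starProjection_of_mem_orthogonal
    (add_mem_sup (U.starProjection_apply_mem x) (V.starProjection_apply_mem x)) ?_
  rw [← inf_orthogonal, add_apply, ← sub_sub]
  exact ⟨sub_mem (sub_starProjection_mem_orthogonal x) (h.ge (V.starProjection_apply_mem x)),
    sub_right_comm x _ _ ▸
      sub_mem (sub_starProjection_mem_orthogonal x) (h.le (U.starProjection_apply_mem x))⟩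

section

variable {n : ℕ}

local notation "ℂ^" n => EuclideanSpace ℂ (Fin n)

lemma projc_eq_starProjection (V : Submodule ℂ (ℂ^n)) : projc V = V.starProjection := rfl

lemma Tc_eq (V : Submodule ℂ (ℂ^n)) (z : ℂ) :
    Tc V z = z • V.starProjection + Vᗮ.starProjection := by
  rw [Tc, projc_eq_starProjection, starProjection_orthogonal']

lemma Tc_zero (V : Submodule ℂ (ℂ^n)) : Tc V 0 = Vᗮ.starProjection := by
  simp [Tc_eq]

lemma Tc_one (V : Submodule ℂ (ℂ^n)) : Tc V 1 = 1 := by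
  simp [Tc]

lemma Tc_bot (z : ℂ) : Tc (⊥ : Submodule ℂ (ℂ^n)) z = 1 := by
  ext x : 1
  simp [Tc, projc_eq_starProjection]

lemma Tc_top (z : ℂ) : Tc (⊤ : Submodule ℂ (ℂ^n)) z = z • 1 := by
  ext x : 1
  simp [Tc_eq, starProjection_eq_self_iff.mpr]

lemma Tc_mul_Tc_self (V : Submodule ℂ (ℂ^n)) (z w : ℂ) :
    Tc V z * Tc V w = Tc V (z * w) := by
  have hP : V.starProjection * V.starProjection = V.starProjection :=
    V.isIdempotentElem_starProjection
  simp only [Tc, projc_eq_starProjection, mul_add, add_mul, sub_mul, mul_sub, smul_mul_assoc,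
    mul_smul_comm, hP, mul_one, one_mul]
  module

lemma Tc_mul_Tc_of_isOrtho {V W : Submodule ℂ (ℂ^n)} (h : V ⟂ W) (z : ℂ) :
    Tc V z * Tc W z = Tc (V ⊔ W) z := by
  ext x : 1
  have hVW : V.starProjection (W.starProjection x) = 0 :=
    V.starProjection_apply_eq_zero_iff.mpr (h.ge (W.starProjection_apply_mem x))
  simp only [Tc, projc_eq_starProjection, h.starProjection_sup_s18, mul_apply_eq_comp,
    add_apply, sub_apply, smul_apply, one_apply_eq_self, map_add, map_sub, map_smul, hVW]
  module

lemma isUnit_Tc (V : Submodule ℂ (ℂ^n)) {z : ℂ} (hz : z ≠ 0) : IsUnit (Tc V z) :=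
  isUnit_iff_exists.mpr ⟨Tc V z⁻¹, by rw [Tc_mul_Tc_self, mul_inv_cancel₀ hz, Tc_one],
    by rw [Tc_mul_Tc_self, inv_mul_cancel₀ hz, Tc_one]⟩

lemma continuous_Tc (V : Submodule ℂ (ℂ^n)) : Continuous (Tc V) := by
  unfold Tc; fun_prop

lemma Tc_zero_apply_eq_zero_iff (V : Submodule ℂ (ℂ^n)) (x : ℂ^n) : Tc V 0 x = 0 ↔ x ∈ V := by
  rw [Tc_zero, starProjection_apply_eq_zero_iff, orthogonal_orthogonal]

lemma Tc_zero_apply_mem_orthogonal (V : Submodule ℂ (ℂ^n)) (x : ℂ^n) : Tc V 0 x ∈ Vᗮ := by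
  rw [Tc_zero]
  exact Vᗮ.starProjection_apply_mem x

noncomputable def tcProd (l : List (Submodule ℂ (ℂ^n))) (z : ℂ) : (ℂ^n) →L[ℂ] ℂ^n :=
  (l.map (Tc · z)).reverse.prod

@[simp]
lemma tcProd_nil (z : ℂ) : tcProd ([] : List (Submodule ℂ (ℂ^n))) z = 1 := rfl

lemma tcProd_cons (V : Submodule ℂ (ℂ^n)) (l : List (Submodule ℂ (ℂ^n))) (z : ℂ) :
    tcProd (V :: l) z = tcProd l z * Tc V z := by
  simp [tcProd]

lemma tcProd_append (l l' : List (Submodule ℂ (ℂ^n))) (z : ℂ) :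
    tcProd (l ++ l') z = tcProd l' z * tcProd l z := by
  simp [tcProd]

lemma tcProd_flatten (ls : List (List (Submodule ℂ (ℂ^n)))) (z : ℂ) :
    tcProd ls.flatten z = (ls.map (tcProd · z)).reverse.prod := by
  induction ls with
  | nil => rfl
  | cons l ls ih => simp [tcProd_append, ih]

lemma tcProd_ofFn {m : ℕ} (L : Fin m → Submodule ℂ (ℂ^n)) (z : ℂ) :
    tcProd (List.ofFn L) z = ((List.ofFn fun i => Tc (L i) z).reverse).prod := by
  simp [tcProd, List.map_ofFn, Function.comp_def]

lemma continuous_tcProd (l : List (Submodule ℂ (ℂ^n))) : Continuous (tcProd l) := by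
  induction l with
  | nil => exact continuous_const
  | cons V l ih =>
    simp only [funext (tcProd_cons V l)]
    exact ih.mul (continuous_Tc V)

lemma tcProd_zero_apply_eq_zero_iff {V : Submodule ℂ (ℂ^n)} {l : List (Submodule ℂ (ℂ^n))}
    (hl : (V :: l).IsChain fun V W : Submodule ℂ (ℂ^n) => W ⊓ Vᗮ = ⊥) (x : ℂ^n) :
    tcProd (V :: l) 0 x = 0 ↔ x ∈ V := by
  induction l generalizing V x with
  | nil => simp [tcProd_cons, Tc_zero_apply_eq_zero_iff]
  | cons W l ih =>
    obtain ⟨hVW, hl⟩ := List.isChain_cons_cons.mp hl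
    rw [tcProd_cons, mul_apply_eq_comp, ih hl, ← Tc_zero_apply_eq_zero_iff V x]
    -- `T_V(0) x` always lies in `Vᗮ`, which meets `W` only in `0`.
    refine ⟨fun hW => ?_, fun h0 => h0 ▸ W.zero_mem⟩
    have hmem : Tc V 0 x ∈ W ⊓ Vᗮ := ⟨hW, Tc_zero_apply_mem_orthogonal V x⟩
    rwa [hVW, Submodule.mem_bot] at hmem

lemma eventually_tcProd_eq_mul_of_cons {V : Submodule ℂ (ℂ^n)} {l l' : List (Submodule ℂ (ℂ^n))}
    {B : ℂ → (ℂ^n) →L[ℂ] ℂ^n} (hB : ContinuousAt B 0)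
    (h : ∀ᶠ z in 𝓝 0, tcProd (V :: l) z = B z * tcProd (V :: l') z) :
    ∀ᶠ z in 𝓝 0, tcProd l z = B z * tcProd l' z := by
  have hne : ∀ᶠ z in 𝓝[≠] 0, tcProd l z = B z * tcProd l' z := by
    filter_upwards [nhdsWithin_le_nhds h, self_mem_nhdsWithin] with z hz hz0
    refine (isUnit_Tc V hz0).mul_left_injective ?_
    simpa only [tcProd_cons, mul_assoc] using hz
  exact ((continuous_tcProd l).continuousAt.eventuallyEq_nhds_iff_eventuallyEq_nhdsNE
    (hB.mul (continuous_tcProd l').continuousAt)).mp hne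

theorem eq_of_eventually_tcProd_eq_mul {l l' : List (Submodule ℂ (ℂ^n))}
    (hlen : l.length = l'.length) (hl : l.IsChain fun V W : Submodule ℂ (ℂ^n) => W ⊓ Vᗮ = ⊥)
    (hl' : l'.IsChain fun V W : Submodule ℂ (ℂ^n) => W ⊓ Vᗮ = ⊥) {B : ℂ → (ℂ^n) →L[ℂ] ℂ^n}
    (hB : ContinuousAt B 0) (hB0 : IsUnit (B 0))
    (h : ∀ᶠ z in 𝓝 0, tcProd l z = B z * tcProd l' z) : l = l' := by
  induction l generalizing l' with
  | nil => exact (List.length_eq_zero_iff.mp hlen.symm).symm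
  | cons V l ih =>
    obtain _ | ⟨V', l'⟩ := l'
    · simp at hlen
    have hV : V = V' := by
      ext x
      rw [← tcProd_zero_apply_eq_zero_iff hl, ← tcProd_zero_apply_eq_zero_iff hl', h.self_of_nhds,
        mul_apply_eq_comp, map_eq_zero_iff _
          (ContinuousLinearMap.isUnit_iff_bijective.mp hB0).injective]
    subst hV
    rw [ih (Nat.succ.inj hlen) hl.tail hl'.tail (eventually_tcProd_eq_mul_of_cons hB h)]

lemma tcProd_ofFn_span_singleton {d : ℕ} (v : Fin d → ℂ^n)
    (hv : Pairwise fun i j => ⟪v i, v j⟫_ℂ = 0) (z : ℂ) :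
    tcProd (List.ofFn fun i => ℂ ∙ v i) z = Tc (span ℂ (Set.range v)) z := by
  induction d with
  | zero => simp [Tc_bot]
  | succ d ih =>
    have hortho : span ℂ (Set.range fun i : Fin d => v i.succ) ⟂ ℂ ∙ v 0 := by
      rw [isOrtho_span]
      rintro _ ⟨i, rfl⟩ _ rfl
      exact hv (Fin.succ_ne_zero i)
    rw [List.ofFn_succ, tcProd_cons, ih _ fun i j hij => hv (Fin.succ_injective _ |>.ne hij),
      Tc_mul_Tc_of_isOrtho hortho, Fin.range_fin_succ, span_insert, sup_comm]
    rfl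

noncomputable def orthogonalLines (V : Submodule ℂ (ℂ^n)) : List (Submodule ℂ (ℂ^n)) :=
  List.ofFn fun i => ℂ ∙ (stdOrthonormalBasis ℂ V i : ℂ^n)

lemma length_orthogonalLines (V : Submodule ℂ (ℂ^n)) :
    (orthogonalLines V).length = Module.finrank ℂ V := by
  simp [orthogonalLines]

lemma orthonormal_coe_stdOrthonormalBasis (V : Submodule ℂ (ℂ^n)) :
    Orthonormal ℂ fun i => (stdOrthonormalBasis ℂ V i : ℂ^n) :=
  (stdOrthonormalBasis ℂ V).orthonormal.comp_linearIsometry V.subtypeₗᵢ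

lemma finrank_of_mem_orthogonalLines {V W : Submodule ℂ (ℂ^n)} (hW : W ∈ orthogonalLines V) :
    Module.finrank ℂ W = 1 := by
  obtain ⟨i, rfl⟩ := List.mem_ofFn.mp hW
  exact finrank_span_singleton ((orthonormal_coe_stdOrthonormalBasis V).ne_zero i)

lemma tcProd_orthogonalLines (V : Submodule ℂ (ℂ^n)) (z : ℂ) :
    tcProd (orthogonalLines V) z = Tc V z := by
  have hspan : span ℂ (Set.range fun i => (stdOrthonormalBasis ℂ V i : ℂ^n)) = V := by
    change span ℂ (Set.range (V.subtype ∘ _)) = V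
    rw [Set.range_comp, span_image, ← (stdOrthonormalBasis ℂ V).coe_toBasis,
      Module.Basis.span_eq, Submodule.map_top, range_subtype]
  rw [orthogonalLines, tcProd_ofFn_span_singleton _ (orthonormal_coe_stdOrthonormalBasis V).2,
    hspan]

namespace VortexStructure

-- `z ^ k₀` is accounted for by `k₀` copies of `T_{ℂⁿ}(z) = z`, each split into `n` lines.
noncomputable def lines (s : VortexStructure n) : List (Submodule ℂ (ℂ^n)) :=
  (List.ofFn fun j => orthogonalLines (s.V j)).flatten ++
    (List.replicate s.k₀ (orthogonalLines ⊤)).flatten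

lemma length_lines (s : VortexStructure n) : s.lines.length = s.order := by
  simp [lines, order, List.sum_ofFn, length_orthogonalLines, List.sum_replicate, add_comm,
    mul_comm, Function.comp_def]

lemma finrank_of_mem_lines {s : VortexStructure n} {W : Submodule ℂ (ℂ^n)} (hW : W ∈ s.lines) :
    Module.finrank ℂ W = 1 := by
  simp only [lines, List.mem_append, List.mem_flatten, List.mem_ofFn, List.mem_replicate] at hW
  obtain ⟨_, ⟨j, rfl⟩, hW⟩ | ⟨_, ⟨-, rfl⟩, hW⟩ := hW <;> exact finrank_of_mem_orthogonalLines hW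

lemma tcProd_lines (s : VortexStructure n) (z : ℂ) : tcProd s.lines z = z ^ s.k₀ • s.Tprod z := by
  simp only [lines, tcProd_append, tcProd_flatten, List.map_ofFn, List.map_replicate,
    Function.comp_def, tcProd_orthogonalLines, Tc_top, List.reverse_replicate, List.prod_replicate,
    smul_pow, one_pow, smul_mul_assoc, one_mul, Tprod]

end VortexStructure

lemma factorizes_of_eq {φ : ℂ → (ℂ^n) →L[ℂ] ℂ^n} {s : VortexStructure n}
    (h : ∀ z, φ z = z ^ s.k₀ • s.Tprod z) : Factorizes φ s :=
  ⟨fun _ => 1, analyticAt_const, .of_forall fun z => ⟨isUnit_one, by rw [h]; rfl⟩⟩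

lemma Factorizes.exists_eventually_eq_mul {φ ψ : ℂ → (ℂ^n) →L[ℂ] ℂ^n} {s : VortexStructure n}
    (hφ : Factorizes φ s) (hψ : Factorizes ψ s) :
    ∃ B : ℂ → (ℂ^n) →L[ℂ] ℂ^n, ContinuousAt B 0 ∧ IsUnit (B 0) ∧
      ∀ᶠ z in 𝓝 0, φ z = B z * ψ z := by
  obtain ⟨A, hA, hφA⟩ := hφ
  obtain ⟨A', hA', hψA'⟩ := hψ
  have hA'0 : IsUnit (A' 0) := hψA'.self_of_nhds.1
  have hinv : ContinuousAt Ring.inverse (A' 0) := by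
    simpa only [hA'0.unit_spec] using NormedRing.inverse_continuousAt hA'0.unit
  refine ⟨fun z => A z * Ring.inverse (A' z), hA.continuousAt.mul (hinv.comp hA'.continuousAt),
    hφA.self_of_nhds.1.mul hA'0.ringInverse, ?_⟩
  filter_upwards [hφA, hψA'] with z hz hz'
  obtain ⟨-, hφz⟩ := hz
  obtain ⟨hA'z, hψz⟩ := hz'
  rw [hφz, hψz, ← ContinuousLinearMap.mul_def, ← ContinuousLinearMap.mul_def, mul_assoc,
    Ring.inverse_mul_cancel_left _ _ hA'z]

end

theorem line_tuple_map_surjective_injective_general {n k : ℕ} :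
    (∀ s : VortexStructure n, s.order = k →
      ∃ L : Fin k → Submodule ℂ (EuclideanSpace ℂ (Fin n)),
        (∀ i, Module.finrank ℂ (L i) = 1) ∧
        Factorizes (fun z => ((List.ofFn fun i => Tc (L i) z).reverse).prod) s) ∧
    (∀ L L' : Fin k → Submodule ℂ (EuclideanSpace ℂ (Fin n)),
      (∀ i, Module.finrank ℂ (L i) = 1) → (∀ i, Module.finrank ℂ (L' i) = 1) →
      (∀ (i : ℕ) (h : i + 1 < k), L ⟨i + 1, h⟩ ⊓ (L ⟨i, Nat.lt_of_succ_lt h⟩)ᗮ = ⊥) →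
      (∀ (i : ℕ) (h : i + 1 < k), L' ⟨i + 1, h⟩ ⊓ (L' ⟨i, Nat.lt_of_succ_lt h⟩)ᗮ = ⊥) →
      ∀ s : VortexStructure n,
        Factorizes (fun z => ((List.ofFn fun i => Tc (L i) z).reverse).prod) s →
        Factorizes (fun z => ((List.ofFn fun i => Tc (L' i) z).reverse).prod) s →
        L = L') := by
  refine ⟨fun s hs => ?_, fun L L' _ _ hL hL' s hφ hφ' => ?_⟩
  · obtain ⟨L, hL⟩ :
        ∃ L : Fin k → Submodule ℂ (EuclideanSpace ℂ (Fin n)), List.ofFn L = s.lines := by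
      rw [← s.length_lines] at hs
      subst hs
      exact ⟨s.lines.get, List.ofFn_get _⟩
    refine ⟨L, fun i => s.finrank_of_mem_lines (hL ▸ List.mem_ofFn.mpr ⟨i, rfl⟩), ?_⟩
    exact factorizes_of_eq fun z => by rw [← tcProd_ofFn, hL, s.tcProd_lines]
  · obtain ⟨B, hB, hB0, h⟩ := hφ.exists_eventually_eq_mul hφ'
    simp only [← tcProd_ofFn] at h
    exact List.ofFn_injective <| eq_of_eventually_tcProd_eq_mul (by simp)
      (List.isChain_ofFn.mpr hL) (List.isChain_ofFn.mpr hL') hB hB0 h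

/-- Proposition 4.1 (algebraic content): the map sending a `k`-tuple of lines
`(L 0, …, L (k-1))` in `ℂ^n` to the internal structure of `z ↦ T_{L (k-1)}(z) ⋯ T_{L 0}(z)`
is surjective onto the internal structures of order `k`, and injective on the tuples
satisfying the non-intersection condition. -/
theorem line_tuple_map_surjective_injective {n k : ℕ} (hn : 0 < n) :
    (∀ s : VortexStructure n, s.order = k →
      ∃ L : Fin k → Submodule ℂ (EuclideanSpace ℂ (Fin n)),
        (∀ i, Module.finrank ℂ (L i) = 1) ∧
        Factorizes (fun z => ((List.ofFn fun i => Tc (L i) z).reverse).prod) s) ∧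
    (∀ L L' : Fin k → Submodule ℂ (EuclideanSpace ℂ (Fin n)),
      (∀ i, Module.finrank ℂ (L i) = 1) → (∀ i, Module.finrank ℂ (L' i) = 1) →
      (∀ (i : ℕ) (h : i + 1 < k), L ⟨i + 1, h⟩ ⊓ (L ⟨i, Nat.lt_of_succ_lt h⟩)ᗮ = ⊥) →
      (∀ (i : ℕ) (h : i + 1 < k), L' ⟨i + 1, h⟩ ⊓ (L' ⟨i, Nat.lt_of_succ_lt h⟩)ᗮ = ⊥) →
      ∀ s : VortexStructure n,
        Factorizes (fun z => ((List.ofFn fun i => Tc (L i) z).reverse).prod) s →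
        Factorizes (fun z => ((List.ofFn fun i => Tc (L' i) z).reverse).prod) s →
        L = L') :=
  line_tuple_map_surjective_injective_general
end
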